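/- Let U ∈ ℝ^{n×r} be entrywise nonnegative and let G ∈ ℝ^{n×r} be such that P_U⁺(G) ≠ 0. Then Z* = P_U⁺(G)/‖P_U⁺(G)‖_F² is the unique solution of the problem: minimize ‖Z‖_F over all Z ∈ ℝ^{n×r} satisfying ⟨Z, G⟩ = 1 and Z_{ij} ≥ 0 for every (i,j) with U_{ij} = 0. That is, Z* is feasible, every feasible Z satisfies ‖Z*‖_F ≤ ‖Z‖_F, and equality holds only for Z = Z*. In particular ⟨G, P_U⁺(G)⟩ = ‖P_U⁺(G)‖_F². -/

import Mathlib

/-!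
For feasible `Z` we have `⟨Z, D⟩ ≥ ⟨Z, G⟩ = 1`, where `D = P_U⁺(G)`: the matrix `D - G` is
nonnegative and supported where `U = 0`, where `Z ≥ 0`. So the feasible set lies in the
half-space `⟨Z, D⟩ ≥ 1`, whose unique point of least norm is `D / ‖D‖²`, and this point is
feasible because `⟨G, D⟩ = ‖D‖²`. Flattening matrices into `EuclideanSpace ℝ (Fin n × Fin r)`
turns `frobInner` into the inner product, so the half-space argument runs in a general real
inner product space.
-/

open Matrix

/-- Frobenius inner product `⟨A,B⟩ = trace(AᵀB) = ∑_{i,j} A_{ij} B_{ij}`. -/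
def frobInner {n r : ℕ} (A B : Matrix (Fin n) (Fin r) ℝ) : ℝ :=
  ∑ i, ∑ j, A i j * B i j

/-- The projection `P_W⁺(Z)`: keeps `Z_{ij}` where `W_{ij} > 0` and takes
`max(0, Z_{ij})` where `W_{ij} = 0`. -/
noncomputable def Pplus {n r : ℕ} (W Z : Matrix (Fin n) (Fin r) ℝ) :
    Matrix (Fin n) (Fin r) ℝ :=
  fun i j => if 0 < W i j then Z i j else max 0 (Z i j)

open RealInnerProductSpace

section HalfSpace

variable {E : Type*} [NormedAddCommGroup E] [InnerProductSpace ℝ E] {z d : E}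

theorem norm_sub_inv_norm_sq_smul_sq_le (hz : 1 ≤ ⟪z, d⟫) :
    ‖z - (‖d‖ ^ 2)⁻¹ • d‖ ^ 2 ≤ ‖z‖ ^ 2 - ‖(‖d‖ ^ 2)⁻¹ • d‖ ^ 2 := by
  have hd : ‖d‖ ≠ 0 := by
    rintro h
    norm_num [norm_eq_zero.mp h] at hz
  have hw : ‖(‖d‖ ^ 2)⁻¹ • d‖ ^ 2 = (‖d‖ ^ 2)⁻¹ := by
    rw [norm_smul, mul_pow, Real.norm_of_nonneg (by positivity)]
    field_simp
  have hzw : (‖d‖ ^ 2)⁻¹ ≤ ⟪z, (‖d‖ ^ 2)⁻¹ • d⟫ := by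
    rw [real_inner_smul_right]
    exact le_mul_of_one_le_right (by positivity) hz
  rw [norm_sub_sq_real, hw]
  linarith

theorem norm_inv_norm_sq_smul_le (hz : 1 ≤ ⟪z, d⟫) : ‖(‖d‖ ^ 2)⁻¹ • d‖ ≤ ‖z‖ :=
  (pow_le_pow_iff_left₀ (norm_nonneg _) (norm_nonneg _) two_ne_zero).mp <| by
    linarith [norm_sub_inv_norm_sq_smul_sq_le hz, sq_nonneg ‖z - (‖d‖ ^ 2)⁻¹ • d‖]

theorem eq_inv_norm_sq_smul_of_norm_eq (hz : 1 ≤ ⟪z, d⟫) (h : ‖(‖d‖ ^ 2)⁻¹ • d‖ = ‖z‖) :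
    z = (‖d‖ ^ 2)⁻¹ • d := by
  have := norm_sub_inv_norm_sq_smul_sq_le hz
  rw [h, sub_self] at this
  exact sub_eq_zero.mp (by simpa using le_antisymm this (sq_nonneg _))

end HalfSpace

noncomputable def Matrix.flattenEuclidean (m n : Type*) [Fintype m] [Fintype n] :
    Matrix m n ℝ ≃ₗ[ℝ] EuclideanSpace ℝ (m × n) :=
  (LinearEquiv.curry ℝ ℝ m n).symm.trans (WithLp.linearEquiv 2 ℝ (m × n → ℝ)).symm

@[simp]
theorem Matrix.flattenEuclidean_apply {m n : Type*} [Fintype m] [Fintype n] (A : Matrix m n ℝ)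
    (p : m × n) : flattenEuclidean m n A p = A p.1 p.2 :=
  rfl

theorem frobInner_eq_inner {n r : ℕ} (A B : Matrix (Fin n) (Fin r) ℝ) :
    frobInner A B = ⟪flattenEuclidean _ _ A, flattenEuclidean _ _ B⟫ := by
  simp [frobInner, PiLp.inner_apply, Fintype.sum_prod_type, mul_comm]

theorem sqrt_frobInner_self {n r : ℕ} (A : Matrix (Fin n) (Fin r) ℝ) :
    √(frobInner A A) = ‖flattenEuclidean _ _ A‖ := by
  rw [frobInner_eq_inner, real_inner_self_eq_norm_sq, Real.sqrt_sq (norm_nonneg _)]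

section Pplus

variable {n r : ℕ} {U G Z : Matrix (Fin n) (Fin r) ℝ}

theorem Pplus_nonneg_of_not_pos {i j} (h : ¬ 0 < U i j) : 0 ≤ Pplus U G i j := by
  simp [Pplus, h]

theorem frobInner_Pplus_eq_frobInner_self (U G : Matrix (Fin n) (Fin r) ℝ) :
    frobInner G (Pplus U G) = frobInner (Pplus U G) (Pplus U G) := by
  refine Finset.sum_congr rfl fun i _ => Finset.sum_congr rfl fun j _ => ?_
  by_cases hU : 0 < U i j
  · simp [Pplus, hU]
  · rcases le_total 0 (G i j) with hG | hG <;> simp [Pplus, hU, hG]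

theorem frobInner_le_frobInner_Pplus (hU : ∀ i j, 0 ≤ U i j)
    (hZ : ∀ i j, U i j = 0 → 0 ≤ Z i j) : frobInner Z G ≤ frobInner Z (Pplus U G) := by
  refine Finset.sum_le_sum fun i _ => Finset.sum_le_sum fun j _ => ?_
  by_cases hpos : 0 < U i j
  · simp [Pplus, hpos]
  · have hZ := hZ i j ((hU i j).eq_or_lt.resolve_right hpos).symm
    simpa [Pplus, hpos] using mul_le_mul_of_nonneg_left (le_max_right 0 (G i j)) hZ

end Pplus

/-- `Z* = P_U⁺(G)/‖P_U⁺(G)‖_F²` is the unique solution of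
`min ‖Z‖_F  s.t.  ⟨Z,G⟩ = 1, Z_{ij} ≥ 0 whenever U_{ij} = 0`;
moreover `⟨G, P_U⁺(G)⟩ = ‖P_U⁺(G)‖_F²`. -/
theorem min_frobenius_norm_solution {n r : ℕ}
    (U G : Matrix (Fin n) (Fin r) ℝ)
    (hU : ∀ i j, 0 ≤ U i j) (hG : Pplus U G ≠ 0) :
    let D := Pplus U G
    let Zstar := (frobInner D D)⁻¹ • D
    -- feasibility
    (frobInner Zstar G = 1 ∧ ∀ i j, U i j = 0 → 0 ≤ Zstar i j) ∧
    -- minimality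
    (∀ Z : Matrix (Fin n) (Fin r) ℝ, frobInner Z G = 1 →
      (∀ i j, U i j = 0 → 0 ≤ Z i j) →
      Real.sqrt (frobInner Zstar Zstar) ≤ Real.sqrt (frobInner Z Z)) ∧
    -- uniqueness
    (∀ Z : Matrix (Fin n) (Fin r) ℝ, frobInner Z G = 1 →
      (∀ i j, U i j = 0 → 0 ≤ Z i j) →
      Real.sqrt (frobInner Zstar Zstar) = Real.sqrt (frobInner Z Z) → Z = Zstar) ∧
    -- in particular
    frobInner G D = frobInner D D := by
  intro D Zstar
  set flat := flattenEuclidean (Fin n) (Fin r)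
  have hS : frobInner D D = ‖flat D‖ ^ 2 := by
    rw [frobInner_eq_inner, real_inner_self_eq_norm_sq]
  have hS_ne : frobInner D D ≠ 0 := by
    simpa [hS] using hG
  have hZstar : flat Zstar = (‖flat D‖ ^ 2)⁻¹ • flat D := by
    rw [map_smul, hS]
  have hGD := frobInner_Pplus_eq_frobInner_self U G
  have hhalfSpace : ∀ Z, frobInner Z G = 1 → (∀ i j, U i j = 0 → 0 ≤ Z i j) → 1 ≤ ⟪flat Z, flat D⟫ :=
    fun Z h1 h2 => by
      rw [← frobInner_eq_inner, ← h1]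
      exact frobInner_le_frobInner_Pplus hU h2
  refine ⟨⟨?_, fun i j h => ?_⟩, fun Z h1 h2 => ?_, fun Z h1 h2 h => ?_, hGD⟩
  · rw [frobInner_eq_inner, map_smul, real_inner_smul_left, real_inner_comm,
      ← frobInner_eq_inner, hGD, inv_mul_cancel₀ hS_ne]
  · exact smul_nonneg (inv_nonneg.mpr (hS ▸ sq_nonneg _))
      (Pplus_nonneg_of_not_pos h.not_gt)
  · rw [sqrt_frobInner_self, sqrt_frobInner_self, hZstar]
    exact norm_inv_norm_sq_smul_le (hhalfSpace Z h1 h2)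
  · rw [sqrt_frobInner_self, sqrt_frobInner_self, hZstar] at h
    apply flat.injective
    rw [hZstar]
    exact eq_inv_norm_sq_smul_of_norm_eq (hhalfSpace Z h1 h2) h
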